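/- For a, a', b > 0 and z ∈ (0,1), ∫₀¹ (1-t)^(a+a'-1) t^(b-1) (1-zt)^(-(a'+b)) ₂F₁(a,b;a+a';1-t) dt = (Γ(a')Γ(b)/Γ(a'+b)) · ₂F₁(a',b;a+a';z). -/

import Mathlib

open MeasureTheory ProbabilityTheory Real Set Filter Topology

noncomputable def gammaDens (p σ y : ℝ) : ℝ :=
  if 0 < y then σ ^ p / Real.Gamma p * Real.exp (-(σ * y)) * y ^ (p - 1) else 0

noncomputable def gammaM (p σ : ℝ) : Measure ℝ :=
  MeasureTheory.volume.withDensity fun y => ENNReal.ofReal (gammaDens p σ y)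

noncomputable def beta1Dens (p q x : ℝ) : ℝ :=
  if 0 < x ∧ x < 1 then
    Real.Gamma (p + q) / (Real.Gamma p * Real.Gamma q) * x ^ (p - 1) * (1 - x) ^ (q - 1)
  else 0

noncomputable def beta1 (p q : ℝ) : Measure ℝ :=
  MeasureTheory.volume.withDensity fun x => ENNReal.ofReal (beta1Dens p q x)

noncomputable def beta2Dens (p q y : ℝ) : ℝ :=
  if 0 < y then
    Real.Gamma (p + q) / (Real.Gamma p * Real.Gamma q) * y ^ (p - 1) * (1 + y) ^ (-(p + q))
  else 0

noncomputable def beta2 (p q : ℝ) : Measure ℝ :=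
  MeasureTheory.volume.withDensity fun y => ENNReal.ofReal (beta2Dens p q y)

/-- Pochhammer (rising factorial) symbol `(a)_n`. -/
noncomputable def poch (a : ℝ) (n : ℕ) : ℝ := ∏ i ∈ Finset.range n, (a + (i : ℝ))

/-- Gauss hypergeometric function `₂F₁(a,b;c;x)`. -/
noncomputable def F21 (a b c x : ℝ) : ℝ :=
  ∑' n : ℕ, poch a n * poch b n / ((n.factorial : ℝ) * poch c n) * x ^ n

/-- Generalized hypergeometric `₃F₂(a₁,a₂,a₃;b₁,b₂;1)` at unit argument. -/
noncomputable def F32one (a1 a2 a3 b1 b2 : ℝ) : ℝ :=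
  ∑' n : ℕ, poch a1 n * poch a2 n * poch a3 n /
    ((n.factorial : ℝ) * poch b1 n * poch b2 n)

/-- Normalizing constant of the real beta-hypergeometric distribution. -/
noncomputable def Cbh (a a' b : ℝ) : ℝ :=
  Real.Gamma (a + b) / (Real.Gamma a * Real.Gamma b * F32one a a b (a + b) (a + a'))

noncomputable def bhDens (a a' b x : ℝ) : ℝ :=
  if 0 < x ∧ x < 1 then
    Cbh a a' b * x ^ (a - 1) * (1 - x) ^ (b - 1) * F21 a b (a + a') x
  else 0

/-- The real beta-hypergeometric distribution `μ_{a,a',b}`. -/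
noncomputable def bhMeasure (a a' b : ℝ) : Measure ℝ :=
  MeasureTheory.volume.withDensity fun x => ENNReal.ofReal (bhDens a a' b x)

/-!
Expand `(1 - z t)^(-(a' + b))` by the binomial series and `₂F₁(a, b; a + a'; 1 - t)` by its
defining series. Every term is nonnegative, so the integral can be computed term by term in
`ℝ≥0∞`, and each term is a Beta integral. For fixed `m` the sum over `n` is
`₂F₁(a, b; a + a' + b + m; 1)`, which Gauss's summation theorem evaluates as a ratio of Gamma
values; after cancellation the series left in `m` is `B(a', b) ₂F₁(a', b; a + a'; z)`.
Gauss's theorem is proved the same way: inside a Beta integral, `t^(-p)` is expanded binomially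
in `1 - t`.
-/

open scoped Nat

lemma poch_succ (a : ℝ) (n : ℕ) : poch a (n + 1) = poch a n * (a + n) :=
  Finset.prod_range_succ _ _

lemma poch_eq_ascPochhammer_eval (a : ℝ) (n : ℕ) : poch a n = (ascPochhammer ℝ n).eval a := by
  induction n with
  | zero => simp [poch]
  | succ n ih => rw [poch_succ, ih, ascPochhammer_succ_eval]

lemma poch_pos {a : ℝ} (ha : 0 < a) (n : ℕ) : 0 < poch a n :=
  Finset.prod_pos fun _ _ => by positivity

lemma Gamma_add_nat_eq_mul_poch {a : ℝ} (ha : 0 < a) (n : ℕ) :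
    Real.Gamma (a + n) = Real.Gamma a * poch a n := by
  induction n with
  | zero => simp [poch]
  | succ n ih =>
    rw [Nat.cast_succ, ← add_assoc, Real.Gamma_add_one (by positivity), ih, poch_succ]
    ring

lemma choose_add_sub_one_eq_poch_div_factorial (a : ℝ) (n : ℕ) :
    Ring.choose (a + n - 1) n = poch a n / n ! := by
  rw [Ring.choose_eq_smul, Polynomial.descPochhammer_smeval_eq_ascPochhammer,
    Polynomial.ascPochhammer_smeval_eq_eval,
    poch_eq_ascPochhammer_eval, smul_eq_mul, div_eq_inv_mul]
  congr 2
  ring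

lemma hasSum_poch_div_factorial_mul_pow (s : ℝ) {x : ℝ} (hx : |x| < 1) :
    HasSum (fun n => poch s n / n ! * x ^ n) ((1 - x) ^ (-s)) := by
  have h := (Real.one_div_one_sub_rpow_hasFPowerSeriesOnBall_zero s).hasSum
    (y := x) (by simpa [enorm_eq_nnnorm, ← NNReal.coe_lt_coe] using hx)
  simp only [FormalMultilinearSeries.ofScalars_apply_eq, choose_add_sub_one_eq_poch_div_factorial,
    smul_eq_mul, zero_add] at h
  rwa [Real.rpow_neg (by linarith [le_abs_self x]), ← one_div]

noncomputable def F21Coeff (a b c : ℝ) (n : ℕ) : ℝ := poch a n * poch b n / (n ! * poch c n)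

lemma F21Coeff_pos {a b c : ℝ} (ha : 0 < a) (hb : 0 < b) (hc : 0 < c) (n : ℕ) :
    0 < F21Coeff a b c n := by
  have := poch_pos ha n; have := poch_pos hb n; have := poch_pos hc n
  unfold F21Coeff; positivity

lemma hasSum_F21 {a b c x : ℝ} (ha : 0 < a) (hb : 0 < b) (hc : 0 < c) (hx : |x| < 1) :
    HasSum (fun n => F21Coeff a b c n * x ^ n) (F21 a b c x) := by
  have hradius := ordinaryHypergeometricSeries_radius_eq_one (𝔸 := ℝ) a b c fun k => by
    have := k.cast_nonneg (α := ℝ)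
    exact ⟨by linarith, by linarith, by linarith⟩
  have h := (ordinaryHypergeometricSeries ℝ a b c).summable (x := x)
    (by simpa [hradius, enorm_eq_nnnorm, ← NNReal.coe_lt_coe] using hx)
  refine (h.congr fun n => ?_).hasSum
  rw [ordinaryHypergeometricSeries_apply_eq, F21Coeff, smul_eq_mul, poch_eq_ascPochhammer_eval,
    poch_eq_ascPochhammer_eval, poch_eq_ascPochhammer_eval]
  field_simp

@[fun_prop]
lemma measurable_F21 (a b c : ℝ) : Measurable (F21 a b c) :=
  Measurable.tsum fun n => by fun_prop

lemma F21_nonneg {a b c x : ℝ} (ha : 0 < a) (hb : 0 < b) (hc : 0 < c) (hx0 : 0 ≤ x)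
    (hx1 : x < 1) : 0 ≤ F21 a b c x :=
  (hasSum_F21 ha hb hc (abs_lt.2 ⟨by linarith, hx1⟩)).nonneg fun n =>
    mul_nonneg (F21Coeff_pos ha hb hc n).le (pow_nonneg hx0 n)

lemma lintegral_ofReal_eq_tsum_of_hasSum {α : Type*} [MeasurableSpace α] {μ : Measure α}
    {f : ℕ → α → ℝ} {g : α → ℝ} (hf : ∀ n, AEMeasurable (f n) μ)
    (hf_nonneg : ∀ᵐ x ∂μ, ∀ n, 0 ≤ f n x)
    (hfg : ∀ᵐ x ∂μ, HasSum (fun n => f n x) (g x)) :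
    ∫⁻ x, ENNReal.ofReal (g x) ∂μ = ∑' n, ∫⁻ x, ENNReal.ofReal (f n x) ∂μ := by
  rw [← lintegral_tsum fun n => (hf n).ennreal_ofReal]
  refine lintegral_congr_ae ?_
  filter_upwards [hf_nonneg, hfg] with x hx hxg
  rw [← ENNReal.ofReal_tsum_of_nonneg hx hxg.summable, hxg.tsum_eq]

lemma beta_add_nat_right {p q : ℝ} (hp : 0 < p) (hq : 0 < q) (n : ℕ) :
    beta p (q + n) = beta p q * (poch q n / poch (p + q) n) := by
  have := poch_pos hq n; have := poch_pos (add_pos hp hq) n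
  have := Real.Gamma_pos_of_pos hq; have := Real.Gamma_pos_of_pos (add_pos hp hq)
  rw [beta, beta, ← add_assoc, Gamma_add_nat_eq_mul_poch hq,
    Gamma_add_nat_eq_mul_poch (add_pos hp hq)]
  field_simp

lemma lintegral_rpow_mul_one_sub_rpow {p q : ℝ} (hp : 0 < p) (hq : 0 < q) :
    ∫⁻ t in Ioo 0 1, ENNReal.ofReal (t ^ (p - 1) * (1 - t) ^ (q - 1)) =
      ENNReal.ofReal (beta p q) := by
  have h := lintegral_betaPDF_eq_one hp hq
  rw [lintegral_betaPDF] at h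
  calc ∫⁻ t in Ioo 0 1, ENNReal.ofReal (t ^ (p - 1) * (1 - t) ^ (q - 1))
      = ∫⁻ t in Ioo 0 1, ENNReal.ofReal (beta p q) *
          ENNReal.ofReal (1 / beta p q * t ^ (p - 1) * (1 - t) ^ (q - 1)) := by
        refine lintegral_congr fun t => ?_
        rw [← ENNReal.ofReal_mul (beta_pos hp hq).le]
        field_simp [(beta_pos hp hq).ne']
    _ = ENNReal.ofReal (beta p q) := by
        rw [lintegral_const_mul' _ _ ENNReal.ofReal_ne_top, h, mul_one]

lemma tsum_ofReal_mul_beta_add_nat {c : ℕ → ℝ} {g : ℝ → ℝ} (hc : ∀ n, 0 ≤ c n)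
    (hg : ∀ x ∈ Ioo (0 : ℝ) 1, HasSum (fun n => c n * x ^ n) (g x)) {p q : ℝ}
    (hp : 0 < p) (hq : 0 < q) :
    ∑' n, ENNReal.ofReal (c n * beta p (q + n)) =
      ∫⁻ t in Ioo 0 1, ENNReal.ofReal (t ^ (p - 1) * (1 - t) ^ (q - 1) * g (1 - t)) := by
  rw [lintegral_ofReal_eq_tsum_of_hasSum
    (f := fun n t => c n * (t ^ (p - 1) * (1 - t) ^ (q + n - 1))) (fun n => by fun_prop)]
  · refine tsum_congr fun n => ?_
    rw [ENNReal.ofReal_mul (hc n),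
      ← lintegral_rpow_mul_one_sub_rpow hp (by positivity : 0 < q + n),
      ← lintegral_const_mul' _ _ ENNReal.ofReal_ne_top]
    simp_rw [← ENNReal.ofReal_mul (hc n)]
  · refine ae_restrict_of_forall_mem measurableSet_Ioo fun t ht n => ?_
    have := ht.1; have : 0 < 1 - t := by linarith [ht.2]
    have := hc n
    positivity
  · refine ae_restrict_of_forall_mem measurableSet_Ioo fun t ht => ?_
    have h1t : 0 < 1 - t := by linarith [ht.2]
    refine ((hg (1 - t) ⟨h1t, by linarith [ht.1]⟩).mul_left
      (t ^ (p - 1) * (1 - t) ^ (q - 1))).congr_fun fun n => ?_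
    rw [add_sub_right_comm, Real.rpow_add_natCast h1t.ne']
    ring

/-- Gauss's summation theorem. -/
theorem tsum_ofReal_F21Coeff_one {p q d : ℝ} (hp : 0 < p) (hq : 0 < q) (hpqd : p + q < d) :
    ∑' n, ENNReal.ofReal (F21Coeff p q d n) =
      ENNReal.ofReal (Real.Gamma d * Real.Gamma (d - p - q) /
        (Real.Gamma (d - p) * Real.Gamma (d - q))) := by
  have hdq : 0 < d - q := by linarith
  have hdpq : 0 < d - p - q := by linarith
  have hcoeff : ∀ n, 0 ≤ poch p n / n ! := fun n => by have := poch_pos hp n; positivity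
  have key : ENNReal.ofReal (beta (d - q) q) * ∑' n, ENNReal.ofReal (F21Coeff p q d n) =
      ENNReal.ofReal (beta (d - p - q) q) := by
    calc ENNReal.ofReal (beta (d - q) q) * ∑' n, ENNReal.ofReal (F21Coeff p q d n)
        = ∑' n, ENNReal.ofReal (poch p n / n ! * beta (d - q) (q + n)) := by
          rw [← ENNReal.tsum_mul_left]
          refine tsum_congr fun n => ?_
          rw [← ENNReal.ofReal_mul (beta_pos hdq hq).le, beta_add_nat_right hdq hq,
            sub_add_cancel, F21Coeff]
          ring_nf
      _ = ∫⁻ t in Ioo 0 1,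
            ENNReal.ofReal (t ^ (d - q - 1) * (1 - t) ^ (q - 1) * (1 - (1 - t)) ^ (-p)) :=
          tsum_ofReal_mul_beta_add_nat hcoeff (fun x hx => hasSum_poch_div_factorial_mul_pow p
            (abs_lt.2 ⟨by linarith [hx.1], hx.2⟩)) hdq hq
      _ = ∫⁻ t in Ioo 0 1, ENNReal.ofReal (t ^ (d - p - q - 1) * (1 - t) ^ (q - 1)) := by
          refine setLIntegral_congr_fun measurableSet_Ioo fun t ht => ?_
          rw [sub_sub_cancel, mul_right_comm, ← Real.rpow_add ht.1]
          ring_nf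
      _ = ENNReal.ofReal (beta (d - p - q) q) := lintegral_rpow_mul_one_sub_rpow hdpq hq
  rw [← ENNReal.eq_div_iff (by simpa using beta_pos hdq hq) ENNReal.ofReal_ne_top] at key
  rw [key, ← ENNReal.ofReal_div_of_pos (beta_pos hdq hq)]
  have := Real.Gamma_pos_of_pos hq; have := Real.Gamma_pos_of_pos hdq
  have := Real.Gamma_pos_of_pos (show 0 < d - p by linarith)
  congr 1
  rw [beta, beta, sub_add_cancel, sub_add_cancel]
  field_simp

theorem lintegral_rpow_mul_one_sub_rpow_mul_F21 {a b c p : ℝ} (ha : 0 < a) (hb : 0 < b)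
    (hc : 0 < c) (hp : 0 < p) (habpc : a + b < p + c) :
    ∫⁻ t in Ioo 0 1, ENNReal.ofReal (t ^ (p - 1) * (1 - t) ^ (c - 1) * F21 a b c (1 - t)) =
      ENNReal.ofReal (Real.Gamma p * Real.Gamma c * Real.Gamma (p + c - a - b) /
        (Real.Gamma (p + c - a) * Real.Gamma (p + c - b))) := by
  rw [← tsum_ofReal_mul_beta_add_nat (fun n => (F21Coeff_pos ha hb hc n).le)
    (fun x hx => hasSum_F21 ha hb hc (abs_lt.2 ⟨by linarith [hx.1], hx.2⟩)) hp hc]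
  have := Real.Gamma_pos_of_pos hc; have := Real.Gamma_pos_of_pos (add_pos hp hc)
  have := Real.Gamma_pos_of_pos (show 0 < p + c - a by linarith)
  have := Real.Gamma_pos_of_pos (show 0 < p + c - b by linarith)
  calc ∑' n, ENNReal.ofReal (F21Coeff a b c n * beta p (c + n))
      = ∑' n, ENNReal.ofReal (beta p c) * ENNReal.ofReal (F21Coeff a b (p + c) n) := by
        refine tsum_congr fun n => ?_
        have := poch_pos hc n
        rw [← ENNReal.ofReal_mul (beta_pos hp hc).le, beta_add_nat_right hp hc, F21Coeff,
          F21Coeff]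
        field_simp
    _ = ENNReal.ofReal (Real.Gamma p * Real.Gamma c * Real.Gamma (p + c - a - b) /
        (Real.Gamma (p + c - a) * Real.Gamma (p + c - b))) := by
        rw [ENNReal.tsum_mul_left, tsum_ofReal_F21Coeff_one ha hb habpc,
          ← ENNReal.ofReal_mul (beta_pos hp hc).le, beta]
        congr 1
        field_simp

lemma lintegral_pow_mul_poch_div_factorial_mul_rpow_mul_F21 {a a' b z : ℝ} (ha : 0 < a)
    (ha' : 0 < a') (hb : 0 < b) (hz : 0 ≤ z) (m : ℕ) :
    ∫⁻ t in Ioo 0 1, ENNReal.ofReal (z ^ m * (poch (a' + b) m / m ! *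
        (t ^ (b + m - 1) * (1 - t) ^ (a + a' - 1) * F21 a b (a + a') (1 - t)))) =
      ENNReal.ofReal (beta a' b * (F21Coeff a' b (a + a') m * z ^ m)) := by
  have := poch_pos (add_pos ha' hb) m; have := poch_pos (add_pos ha ha') m
  have := poch_pos ha' m; have := poch_pos hb m
  have := Real.Gamma_pos_of_pos ha'; have := Real.Gamma_pos_of_pos hb
  have := Real.Gamma_pos_of_pos (add_pos ha ha'); have := Real.Gamma_pos_of_pos (add_pos ha' hb)
  simp_rw [← mul_assoc (z ^ m),
    ENNReal.ofReal_mul (by positivity : 0 ≤ z ^ m * (poch (a' + b) m / m !))]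
  rw [lintegral_const_mul' _ _ ENNReal.ofReal_ne_top, lintegral_rpow_mul_one_sub_rpow_mul_F21 ha hb
    (add_pos ha ha') (by positivity) (by linarith [m.cast_nonneg (α := ℝ)]),
    ← ENNReal.ofReal_mul (by positivity)]
  congr 1
  rw [show b + m + (a + a') - a - b = a' + m by ring,
    show b + m + (a + a') - a = a' + b + m by ring, show b + m + (a + a') - b = a + a' + m by ring,
    Gamma_add_nat_eq_mul_poch hb, Gamma_add_nat_eq_mul_poch ha',
    Gamma_add_nat_eq_mul_poch (add_pos ha' hb), Gamma_add_nat_eq_mul_poch (add_pos ha ha'), beta,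
    F21Coeff]
  field_simp

lemma hasSum_pow_mul_poch_div_factorial_mul_rpow_mul_F21 {a a' b z t : ℝ} (hz : |z| < 1)
    (ht : t ∈ Ioo 0 1) :
    HasSum (fun m : ℕ => z ^ m * (poch (a' + b) m / m ! *
      (t ^ (b + m - 1) * (1 - t) ^ (a + a' - 1) * F21 a b (a + a') (1 - t))))
      ((1 - t) ^ (a + a' - 1) * t ^ (b - 1) * (1 - z * t) ^ (-(a' + b)) *
        F21 a b (a + a') (1 - t)) := by
  have hzt : |z * t| < 1 := by
    rw [abs_mul, abs_of_pos ht.1]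
    nlinarith [abs_nonneg z, ht.1, ht.2]
  rw [mul_right_comm _ ((1 - z * t) ^ _)]
  refine ((hasSum_poch_div_factorial_mul_pow (a' + b) hzt).mul_left
    ((1 - t) ^ (a + a' - 1) * t ^ (b - 1) * F21 a b (a + a') (1 - t))).congr_fun fun m => ?_
  rw [add_sub_right_comm, Real.rpow_add_natCast ht.1.ne', mul_pow]
  ring

theorem key_integral_identity (a a' b : ℝ) (ha : 0 < a) (ha' : 0 < a') (hb : 0 < b)
    (z : ℝ) (hz : z ∈ Set.Ioo (0 : ℝ) 1) :
    ∫ t in Set.Ioo (0 : ℝ) 1,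
        (1 - t) ^ (a + a' - 1) * t ^ (b - 1) * (1 - z * t) ^ (-(a' + b)) *
          F21 a b (a + a') (1 - t) =
      Real.Gamma a' * Real.Gamma b / Real.Gamma (a' + b) * F21 a' b (a + a') z := by
  obtain ⟨hz0, hz1⟩ := hz
  have hz' : |z| < 1 := abs_lt.2 ⟨by linarith, hz1⟩
  have hc : 0 < a + a' := add_pos ha ha'
  have hterm_nonneg : ∀ t ∈ Ioo (0 : ℝ) 1, ∀ m : ℕ, 0 ≤ z ^ m * (poch (a' + b) m / m ! *
      (t ^ (b + m - 1) * (1 - t) ^ (a + a' - 1) * F21 a b (a + a') (1 - t))) := fun t ht m => by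
    have := F21_nonneg (x := 1 - t) ha hb hc (by linarith [ht.2]) (by linarith [ht.1])
    have := poch_pos (add_pos ha' hb) m; have := ht.1; have : 0 < 1 - t := by linarith [ht.2]
    positivity
  have hseries := fun t (ht : t ∈ Ioo (0 : ℝ) 1) =>
    hasSum_pow_mul_poch_div_factorial_mul_rpow_mul_F21 (a := a) (a' := a') (b := b)
      hz' ht
  have hsum := (hasSum_F21 ha' hb hc hz').mul_left (beta a' b)
  rw [integral_eq_lintegral_of_nonneg_ae (ae_restrict_of_forall_mem measurableSet_Ioo fun t ht =>
      (hseries t ht).nonneg (hterm_nonneg t ht)) (by fun_prop),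
    lintegral_ofReal_eq_tsum_of_hasSum (fun m => by fun_prop)
      (ae_restrict_of_forall_mem measurableSet_Ioo hterm_nonneg)
      (ae_restrict_of_forall_mem measurableSet_Ioo hseries),
    tsum_congr (lintegral_pow_mul_poch_div_factorial_mul_rpow_mul_F21 ha ha' hb hz0.le),
    ← ENNReal.ofReal_tsum_of_nonneg (fun m => mul_nonneg (beta_pos ha' hb).le
      (mul_nonneg (F21Coeff_pos ha' hb hc m).le (pow_nonneg hz0.le m))) hsum.summable,
    hsum.tsum_eq, ENNReal.toReal_ofReal (mul_nonneg (beta_pos ha' hb).le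
      (F21_nonneg ha' hb hc hz0.le hz1)), beta]
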